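/- arXiv:1908.03065 — 3 statements merged into one kernel-verified Lean document; each statement's English description precedes it below -/
import Mathlib

section
/- Let f_1,…,f_m be integrable real functions on (0,1) for which all iterated integrals g(f_{i_1},…,f_{i_l}) below are absolutely convergent, where g(f_1,…,f_m) := ∫_{0<t_m<⋯<t_2<t_1<1} f_1(t_1) f_2(t_2) ⋯ f_m(t_m) dt_1 dt_2 ⋯ dt_m. Then g(f_1, f_2, …, f_m) + (−1)^m g(f_m, f_{m−1}, …, f_1) = Σ_{i=1}^{m−1} (−1)^{i−1} g(f_i, f_{i−1}, …, f_1) · g(f_{i+1}, f_{i+2}, …, f_m). -/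
open MeasureTheory

/-- The open simplex `{0 < t_N < ⋯ < t₂ < t₁ < t}` (coordinates strictly decreasing
in the index, all lying in `(0, t)`). -/
def simplexTo (N : ℕ) (t : ℝ) : Set (Fin N → ℝ) :=
  {u | (∀ i, 0 < u i ∧ u i < t) ∧ ∀ i j : Fin N, i < j → u j < u i}

/-- The iterated integral `∫_{0 < t_N < ⋯ < t₁ < t} f₁(t₁) ⋯ f_N(t_N) dt₁ ⋯ dt_N`
of a word `fs = [f₁, …, f_N]` of integrands. -/
noncomputable def itIntegralTo (fs : List (ℝ → ℝ)) (t : ℝ) : ℝ :=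
  ∫ u in simplexTo fs.length t, ∏ i : Fin fs.length, fs.get i (u i)

/-- The iterated integral `∫_{0 < t_N < ⋯ < t₁ < 1} f₁(t₁) ⋯ f_N(t_N) dt₁ ⋯ dt_N`. -/
noncomputable def itIntegral (fs : List (ℝ → ℝ)) : ℝ := itIntegralTo fs 1

/-- The integrand `u ↦ ∏ᵢ fᵢ(uᵢ)` on the simplex, for a word `fs` of functions. -/
def simplexProd (fs : List (ℝ → ℝ)) : (Fin fs.length → ℝ) → ℝ :=
  fun u => ∏ i : Fin fs.length, fs.get i (u i)

/-- The reversed prefix `(f_i, f_{i-1}, …, f₁)`. -/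
def prefRev (f : ℕ → ℝ → ℝ) (i : ℕ) : List (ℝ → ℝ) :=
  ((List.range i).map fun l => f (l + 1)).reverse

/-- The suffix `(f_{i+1}, f_{i+2}, …, f_m)`. -/
def suff (f : ℕ → ℝ → ℝ) (m i : ℕ) : List (ℝ → ℝ) :=
  (List.range (m - i)).map fun l => f (i + l + 1)

/-!
For `0 ≤ p < m` let `P p` be the integral of `f₁(u₀) ⋯ f_m(u_{m-1})` over the "peak" region
of `(0,1)^m` where `u₀ < ⋯ < u_p > u_{p+1} > ⋯ > u_{m-1}`. Reversing the order of the
coordinates turns `g(f_i, …, f₁)` into an integral over `u₀ < ⋯ < u_{i-1}`, so by Fubini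
`g(f_i, …, f₁) · g(f_{i+1}, …, f_m)` is the integral over the region where the first `i`
coordinates increase and the last `m - i` decrease. Up to the null set `u_{i-1} = u_i`, that
region is the disjoint union of the peak regions for `p = i - 1` and `p = i`. Hence the
alternating sum telescopes to `P 0 + (-1)^m P (m - 1)`, and `P 0 = g(f₁, …, f_m)`,
`P (m - 1) = g(f_m, …, f₁)`.
-/

open Set

def ascSimplex (n : ℕ) (t : ℝ) : Set (Fin n → ℝ) :=
  {u | (∀ i, 0 < u i ∧ u i < t) ∧ StrictMono u}

def peakSet (n p : ℕ) (t : ℝ) : Set (Fin n → ℝ) :=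
  {u | (∀ i, 0 < u i ∧ u i < t) ∧
    StrictMonoOn u {k | (k : ℕ) ≤ p} ∧ StrictAntiOn u {k | p ≤ (k : ℕ)}}

def ascDescSet (n p : ℕ) (t : ℝ) : Set (Fin n → ℝ) :=
  {u | (∀ i, 0 < u i ∧ u i < t) ∧
    StrictMonoOn u {k | (k : ℕ) < p} ∧ StrictAntiOn u {k | p ≤ (k : ℕ)}}

lemma strictMonoOn_range_iff {α β γ : Type*} [LinearOrder α] [Preorder β] [Preorder γ]
    {φ : α → β} (hφ : StrictMono φ) {f : β → γ} :
    StrictMonoOn f (range φ) ↔ StrictMono (f ∘ φ) :=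
  ⟨fun hf _ _ hab => hf (mem_range_self _) (mem_range_self _) (hφ hab),
    by rintro hf _ ⟨a, rfl⟩ _ ⟨b, rfl⟩ hab; exact hf (hφ.lt_iff_lt.mp hab)⟩

lemma strictAntiOn_range_iff {α β γ : Type*} [LinearOrder α] [Preorder β] [Preorder γ]
    {φ : α → β} (hφ : StrictMono φ) {f : β → γ} :
    StrictAntiOn f (range φ) ↔ StrictAnti (f ∘ φ) :=
  strictMonoOn_range_iff (γ := γᵒᵈ) hφ

section PeakSet

variable {n : ℕ} {t : ℝ}

lemma peakSet_zero : peakSet n 0 t = simplexTo n t := by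
  have hsub : {k : Fin n | (k : ℕ) ≤ 0}.Subsingleton := fun a ha b hb =>
    Fin.ext (by simp_all)
  have huniv : {k : Fin n | 0 ≤ (k : ℕ)} = univ := eq_univ_of_forall fun _ => Nat.zero_le _
  ext u
  refine and_congr_right fun _ => ?_
  rw [huniv, strictAntiOn_univ]
  exact ⟨fun h => h.2, fun h => ⟨hsub.strictMonoOn u, h⟩⟩

lemma peakSet_sub_one : peakSet n (n - 1) t = ascSimplex n t := by
  have hsub : {k : Fin n | n - 1 ≤ (k : ℕ)}.Subsingleton := fun a ha b hb =>
    Fin.ext (by simp only [mem_ofPred_eq] at ha hb; omega)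
  have huniv : {k : Fin n | (k : ℕ) ≤ n - 1} = univ := eq_univ_of_forall fun k => by
    simp only [mem_ofPred_eq]; omega
  ext u
  refine and_congr_right fun _ => ?_
  rw [huniv, strictMonoOn_univ]
  exact ⟨fun h => h.1, fun h => ⟨h, hsub.strictAntiOn u⟩⟩

lemma peakSet_subset_ascDescSet {p q : ℕ} (h₁ : p ≤ q) (h₂ : q ≤ p + 1) :
    peakSet n p t ⊆ ascDescSet n q t := fun _ ⟨hb, hmono, hanti⟩ =>
  ⟨hb, hmono.mono fun k hk => by simp only [mem_ofPred_eq] at hk ⊢; omega,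
    hanti.mono fun k hk => by simp only [mem_ofPred_eq] at hk ⊢; omega⟩

variable {j : ℕ} (h : j + 1 < n)
include h

lemma disjoint_peakSet_peakSet_succ : Disjoint (peakSet n j t) (peakSet n (j + 1) t) := by
  rw [Set.disjoint_left]
  rintro w ⟨-, -, hanti⟩ ⟨-, hmono, -⟩
  have hlt : (⟨j, by omega⟩ : Fin n) < ⟨j + 1, h⟩ := Fin.mk_lt_mk.mpr (Nat.lt_succ_self j)
  exact (hmono (Nat.le_succ j) (le_refl (j + 1)) hlt).asymm
    (hanti (le_refl j) (Nat.le_succ j) hlt)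

lemma ascDescSet_subset_union :
    ascDescSet n (j + 1) t ⊆
      peakSet n j t ∪ peakSet n (j + 1) t ∪ {w | w ⟨j, by omega⟩ = w ⟨j + 1, h⟩} := by
  rintro w ⟨hb, hmono, hanti⟩
  rcases lt_trichotomy (w ⟨j, by omega⟩) (w ⟨j + 1, h⟩) with hlt | heq | hgt
  · refine .inl (.inr ⟨hb, fun a _ b hb hab => ?_, hanti⟩)
    have hab' : (a : ℕ) < b := hab
    rcases Nat.lt_or_eq_of_le hb with hb | hb
    · exact hmono (show (a : ℕ) < j + 1 by omega) hb hab
    have hle : a ≤ ⟨j, by omega⟩ := Fin.le_def.mpr (show (a : ℕ) ≤ j by omega)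
    rw [show b = ⟨j + 1, h⟩ from Fin.ext hb]
    exact (hmono.monotoneOn (show (a : ℕ) < j + 1 by omega) (Nat.lt_succ_self j) hle).trans_lt hlt
  · exact .inr heq
  · refine .inl (.inl ⟨hb, hmono.mono fun _ => Nat.lt_succ_of_le, fun a ha b _ hab => ?_⟩)
    have hab' : (a : ℕ) < b := hab
    rcases Nat.lt_or_eq_of_le ha with ha | ha
    · exact hanti ha (show j + 1 ≤ (b : ℕ) by omega) hab
    have hle : ⟨j + 1, h⟩ ≤ b := Fin.le_def.mpr (show j + 1 ≤ (b : ℕ) by omega)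
    rw [show a = ⟨j, by omega⟩ from Fin.ext ha.symm]
    exact (hanti.antitoneOn (le_refl (j + 1)) (show j + 1 ≤ (b : ℕ) by omega) hle).trans_lt hgt

end PeakSet

lemma measurableSet_peakSet {n p : ℕ} {t : ℝ} : MeasurableSet (peakSet n p t) :=
  measurableSet_setOfPred.2 (by unfold StrictMonoOn StrictAntiOn; fun_prop)

lemma volume_setOf_apply_eq_apply {ι : Type*} [Fintype ι] {a b : ι} (hab : a ≠ b) :
    volume {w : ι → ℝ | w a = w b} = 0 := by
  let L : (ι → ℝ) →ₗ[ℝ] ℝ :=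
    LinearMap.proj (R := ℝ) (φ := fun _ => ℝ) a - LinearMap.proj b
  have hker : {w : ι → ℝ | w a = w b} = LinearMap.ker L := by
    ext w
    simp [L, sub_eq_zero]
  rw [hker]
  refine Measure.addHaar_submodule _ _ fun htop => ?_
  classical
  have hmem : Pi.single a (1 : ℝ) ∈ LinearMap.ker L := htop ▸ Submodule.mem_top
  simp [L, Pi.single_eq_of_ne hab.symm] at hmem

section Split

variable {n j : ℕ} {t : ℝ} (h : j + 1 < n)
include h

lemma ascDescSet_ae_eq_union :
    ascDescSet n (j + 1) t =ᵐ[volume]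
      (peakSet n j t ∪ peakSet n (j + 1) t : Set (Fin n → ℝ)) := by
  have hnull : {w : Fin n → ℝ | w ⟨j, by omega⟩ = w ⟨j + 1, h⟩}
      =ᵐ[volume] (∅ : Set (Fin n → ℝ)) :=
    ae_eq_empty.2 (volume_setOf_apply_eq_apply (Fin.ne_of_val_ne (Nat.succ_ne_self j).symm))
  refine Filter.EventuallyLE.antisymm ?_ (union_subset ?_ ?_).eventuallyLE
  · exact (ascDescSet_subset_union h).eventuallyLE.trans
      (union_ae_eq_left_of_ae_eq_empty hnull).le
  · exact peakSet_subset_ascDescSet (Nat.le_succ j) le_rfl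
  · exact peakSet_subset_ascDescSet le_rfl (Nat.le_succ _)

lemma setIntegral_ascDescSet_eq_add {E : Type*} [NormedAddCommGroup E] [NormedSpace ℝ E]
    {F : (Fin n → ℝ) → E} (hF : IntegrableOn F (ascDescSet n (j + 1) t)) :
    ∫ w in ascDescSet n (j + 1) t, F w =
      (∫ w in peakSet n j t, F w) + ∫ w in peakSet n (j + 1) t, F w := by
  rw [setIntegral_congr_set (ascDescSet_ae_eq_union h),
    setIntegral_union (disjoint_peakSet_peakSet_succ h) measurableSet_peakSet
      (hF.mono_set (peakSet_subset_ascDescSet (Nat.le_succ j) le_rfl))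
      (hF.mono_set (peakSet_subset_ascDescSet le_rfl (Nat.le_succ _)))]

end Split

section Reverse

variable {n : ℕ} {t : ℝ}

def revCoords (n : ℕ) : (Fin n → ℝ) ≃ᵐ (Fin n → ℝ) :=
  MeasurableEquiv.piCongrLeft (fun _ => ℝ) Fin.revPerm

lemma revCoords_apply (u : Fin n → ℝ) : revCoords n u = u ∘ Fin.rev := by
  funext k
  simpa [revCoords] using MeasurableEquiv.piCongrLeft_apply_apply (β := fun _ : Fin n => ℝ)
    Fin.revPerm u k.rev

lemma measurePreserving_revCoords : MeasurePreserving (revCoords n) volume volume :=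
  volume_measurePreserving_piCongrLeft (fun _ => ℝ) Fin.revPerm

lemma revCoords_preimage_simplexTo : revCoords n ⁻¹' simplexTo n t = ascSimplex n t := by
  ext u
  simp only [mem_preimage, revCoords_apply, simplexTo, ascSimplex, mem_ofPred_eq]
  refine and_congr (Fin.rev_surjective.forall (p := fun k => 0 < u k ∧ u k < t)).symm
    ⟨fun h => ?_, fun h => h.comp_strictAnti Fin.rev_strictAnti⟩
  simpa [Function.comp_def] using (show StrictAnti (u ∘ Fin.rev) from h).comp Fin.rev_strictAnti

variable {E : Type*} [NormedAddCommGroup E] (F : (Fin n → ℝ) → E)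

lemma setIntegral_simplexTo_eq_ascSimplex [NormedSpace ℝ E] :
    ∫ u in simplexTo n t, F u = ∫ u in ascSimplex n t, F (u ∘ Fin.rev) := by
  simp only [← revCoords_apply, ← revCoords_preimage_simplexTo]
  exact (measurePreserving_revCoords.setIntegral_preimage_emb
    (revCoords n).measurableEmbedding F _).symm

lemma integrableOn_simplexTo_iff :
    IntegrableOn F (simplexTo n t) ↔
      IntegrableOn (fun u => F (u ∘ Fin.rev)) (ascSimplex n t) := by
  simp only [← revCoords_apply, ← revCoords_preimage_simplexTo]
  exact (measurePreserving_revCoords.integrableOn_comp_preimage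
    (revCoords n).measurableEmbedding).symm

end Reverse

section Fubini

variable {i m : ℕ} (h : i ≤ m) {t : ℝ}

def finSplit : Fin i ⊕ Fin (m - i) ≃ Fin m :=
  finSumFinEquiv.trans (finCongr (Nat.add_sub_cancel' h))

@[simp]
lemma finSplit_inl_val (a : Fin i) : (finSplit h (.inl a) : ℕ) = a :=
  rfl

@[simp]
lemma finSplit_inr_val (b : Fin (m - i)) : (finSplit h (.inr b) : ℕ) = i + b :=
  rfl

lemma strictMono_finSplit_inl : StrictMono (finSplit h ∘ Sum.inl) := fun _ _ hab =>
  Fin.lt_def.mpr hab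

lemma strictMono_finSplit_inr : StrictMono (finSplit h ∘ Sum.inr) := fun _ _ hab =>
  Fin.lt_def.mpr (Nat.add_lt_add_left hab i)

lemma range_finSplit_inl : range (finSplit h ∘ Sum.inl) = {k : Fin m | (k : ℕ) < i} := by
  ext k
  refine ⟨by rintro ⟨a, rfl⟩; simp, fun hk => ⟨⟨k, hk⟩, Fin.ext (by simp)⟩⟩

lemma range_finSplit_inr : range (finSplit h ∘ Sum.inr) = {k : Fin m | i ≤ (k : ℕ)} := by
  ext k
  refine ⟨by rintro ⟨b, rfl⟩; simp, fun hk => ?_⟩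
  have hk : i ≤ (k : ℕ) := hk
  refine ⟨⟨k - i, by omega⟩, Fin.ext ?_⟩
  simp only [Function.comp_apply, finSplit_inr_val]
  omega

def piFinSplit : (Fin i → ℝ) × (Fin (m - i) → ℝ) ≃ᵐ (Fin m → ℝ) :=
  (MeasurableEquiv.sumPiEquivProdPi fun _ => ℝ).symm.trans
    (MeasurableEquiv.piCongrLeft (fun _ => ℝ) (finSplit h))

lemma measurePreserving_piFinSplit : MeasurePreserving (piFinSplit h) volume volume :=
  (volume_measurePreserving_piCongrLeft (fun _ => ℝ) (finSplit h)).comp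
    (volume_measurePreserving_sumPiEquivProdPi_symm fun _ => ℝ)

lemma piFinSplit_comp_inl (p : (Fin i → ℝ) × (Fin (m - i) → ℝ)) :
    piFinSplit h p ∘ finSplit h ∘ Sum.inl = p.1 :=
  funext (Equiv.piCongrLeft_sumInl (fun _ => ℝ) (finSplit h) p.1 p.2)

lemma piFinSplit_comp_inr (p : (Fin i → ℝ) × (Fin (m - i) → ℝ)) :
    piFinSplit h p ∘ finSplit h ∘ Sum.inr = p.2 :=
  funext (Equiv.piCongrLeft_sumInr (fun _ => ℝ) (finSplit h) p.1 p.2)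

lemma piFinSplit_preimage_ascDescSet :
    piFinSplit h ⁻¹' ascDescSet m i t = ascSimplex i t ×ˢ simplexTo (m - i) t := by
  ext p
  have hbounds : (∀ k, 0 < piFinSplit h p k ∧ piFinSplit h p k < t) ↔
      (∀ a, 0 < p.1 a ∧ p.1 a < t) ∧ ∀ b, 0 < p.2 b ∧ p.2 b < t := by
    rw [← (finSplit h).forall_congr_right, Sum.forall, ← piFinSplit_comp_inl h p,
      ← piFinSplit_comp_inr h p]
    rfl
  have hmono : StrictMonoOn (piFinSplit h p) {k | (k : ℕ) < i} ↔ StrictMono p.1 := by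
    rw [← range_finSplit_inl h, strictMonoOn_range_iff (strictMono_finSplit_inl h),
      piFinSplit_comp_inl]
  have hanti : StrictAntiOn (piFinSplit h p) {k | i ≤ (k : ℕ)} ↔ StrictAnti p.2 := by
    rw [← range_finSplit_inr h, strictAntiOn_range_iff (strictMono_finSplit_inr h),
      piFinSplit_comp_inr]
  simp only [mem_preimage, ascDescSet, mem_ofPred_eq, hbounds, hmono, hanti, mem_prod,
    ascSimplex, simplexTo]
  tauto

variable {L : Type*} [RCLike L]
  (F : (Fin i → ℝ) → L) (G : (Fin (m - i) → ℝ) → L)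

lemma setIntegral_ascDescSet_mul :
    ∫ w in ascDescSet m i t, F ((piFinSplit h).symm w).1 * G ((piFinSplit h).symm w).2
      = (∫ u in ascSimplex i t, F u) * ∫ v in simplexTo (m - i) t, G v := by
  rw [← (measurePreserving_piFinSplit h).setIntegral_preimage_emb
    (piFinSplit h).measurableEmbedding, piFinSplit_preimage_ascDescSet, Measure.volume_eq_prod,
    ← Measure.prod_restrict]
  simp only [MeasurableEquiv.symm_apply_apply]
  exact integral_prod_mul F G

variable {F G} in
lemma integrableOn_ascDescSet_mul (hF : IntegrableOn F (ascSimplex i t))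
    (hG : IntegrableOn G (simplexTo (m - i) t)) :
    IntegrableOn (fun w => F ((piFinSplit h).symm w).1 * G ((piFinSplit h).symm w).2)
      (ascDescSet m i t) := by
  rw [← (measurePreserving_piFinSplit h).integrableOn_comp_preimage
    (piFinSplit h).measurableEmbedding, piFinSplit_preimage_ascDescSet]
  simp only [Function.comp_def, MeasurableEquiv.symm_apply_apply]
  rw [IntegrableOn, Measure.volume_eq_prod, ← Measure.prod_restrict]
  exact hF.mul_prod hG

lemma prod_eq_mul_prod_piFinSplit_symm (g : Fin m → ℝ → ℝ) (w : Fin m → ℝ) :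
    ∏ k, g k (w k) = (∏ a, g (finSplit h (.inl a)) (((piFinSplit h).symm w).1 a)) *
      ∏ b, g (finSplit h (.inr b)) (((piFinSplit h).symm w).2 b) := by
  rw [← (finSplit h).prod_comp, Fintype.prod_sum_type]
  rfl

end Fubini

lemma setIntegral_ascSimplex_mul_simplexTo {m j : ℕ} {t : ℝ} (h : j + 1 < m)
    (g : Fin m → ℝ → ℝ)
    (hF : IntegrableOn (fun u => ∏ a, g (finSplit h.le (.inl a)) (u a)) (ascSimplex (j + 1) t))
    (hG : IntegrableOn (fun v => ∏ b, g (finSplit h.le (.inr b)) (v b))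
      (simplexTo (m - (j + 1)) t)) :
    (∫ u in ascSimplex (j + 1) t, ∏ a, g (finSplit h.le (.inl a)) (u a)) *
        ∫ v in simplexTo (m - (j + 1)) t, ∏ b, g (finSplit h.le (.inr b)) (v b) =
      (∫ w in peakSet m j t, ∏ k, g k (w k)) +
        ∫ w in peakSet m (j + 1) t, ∏ k, g k (w k) := by
  have hprod := prod_eq_mul_prod_piFinSplit_symm h.le g
  rw [← setIntegral_ascDescSet_eq_add h, ← setIntegral_ascDescSet_mul h.le]
  · simp_rw [hprod]
  · simp_rw [hprod]
    exact integrableOn_ascDescSet_mul h.le hF hG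

section GetElem

variable {fs : List (ℝ → ℝ)} {n : ℕ} (hn : fs.length = n) {g : Fin n → ℝ → ℝ}
  (hg : ∀ k : Fin n, fs[(k : ℕ)]'(hn ▸ k.isLt) = g k) (t : ℝ)
include hg

lemma itIntegralTo_eq_of_getElem :
    itIntegralTo fs t = ∫ u in simplexTo n t, ∏ k, g k (u k) := by
  subst hn
  obtain rfl : fs.get = g := funext hg
  rfl

lemma integrableOn_simplexProd_iff_of_getElem :
    IntegrableOn (simplexProd fs) (simplexTo fs.length t) ↔
      IntegrableOn (fun u => ∏ k, g k (u k)) (simplexTo n t) := by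
  subst hn
  obtain rfl : fs.get = g := funext hg
  rfl

end GetElem

section Words

variable (f : ℕ → ℝ → ℝ) (t : ℝ)

lemma itIntegralTo_map_range (m : ℕ) :
    itIntegralTo ((List.range m).map fun l => f (l + 1)) t =
      ∫ u in simplexTo m t, ∏ k : Fin m, f (k + 1) (u k) :=
  itIntegralTo_eq_of_getElem (by simp) (fun k => by simp) t

lemma length_prefRev (i : ℕ) : (prefRev f i).length = i := by
  simp [prefRev]

lemma getElem_prefRev (i : ℕ) (k : Fin i) :
    (prefRev f i)[(k : ℕ)]'((length_prefRev f i).symm ▸ k.isLt) = f (k.rev + 1) := by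
  simp only [prefRev, List.getElem_reverse, List.getElem_map, List.getElem_range,
    List.length_map, List.length_range, Fin.val_rev]
  congr 1
  omega

lemma prod_rev_eq_prod (i : ℕ) (u : Fin i → ℝ) :
    ∏ k : Fin i, f (k.rev + 1) ((u ∘ Fin.rev) k) = ∏ k : Fin i, f (k + 1) (u k) :=
  Equiv.prod_comp Fin.revPerm fun k => f (k + 1) (u k)

lemma itIntegralTo_prefRev (i : ℕ) :
    itIntegralTo (prefRev f i) t = ∫ u in ascSimplex i t, ∏ k : Fin i, f (k + 1) (u k) := by
  rw [itIntegralTo_eq_of_getElem (length_prefRev f i) (getElem_prefRev f i),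
    setIntegral_simplexTo_eq_ascSimplex]
  simp only [prod_rev_eq_prod]

lemma integrableOn_prefRev_iff (i : ℕ) :
    IntegrableOn (simplexProd (prefRev f i)) (simplexTo (prefRev f i).length t) ↔
      IntegrableOn (fun u => ∏ k : Fin i, f (k + 1) (u k)) (ascSimplex i t) := by
  rw [integrableOn_simplexProd_iff_of_getElem (length_prefRev f i) (getElem_prefRev f i),
    integrableOn_simplexTo_iff]
  simp only [prod_rev_eq_prod]

lemma length_suff (m i : ℕ) : (suff f m i).length = m - i := by
  simp [suff]

lemma getElem_suff (m i : ℕ) (k : Fin (m - i)) :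
    (suff f m i)[(k : ℕ)]'((length_suff f m i).symm ▸ k.isLt) = f (i + k + 1) := by
  simp only [suff, List.getElem_map, List.getElem_range]

lemma itIntegralTo_suff (m i : ℕ) :
    itIntegralTo (suff f m i) t =
      ∫ v in simplexTo (m - i) t, ∏ k : Fin (m - i), f (i + k + 1) (v k) :=
  itIntegralTo_eq_of_getElem (length_suff f m i) (getElem_suff f m i) t

lemma integrableOn_suff_iff (m i : ℕ) :
    IntegrableOn (simplexProd (suff f m i)) (simplexTo (suff f m i).length t) ↔
      IntegrableOn (fun v => ∏ k : Fin (m - i), f (i + k + 1) (v k)) (simplexTo (m - i) t) :=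
  integrableOn_simplexProd_iff_of_getElem (length_suff f m i) (getElem_suff f m i) t

lemma itIntegralTo_prefRev_mul_suff {m j : ℕ} (h : j + 1 < m)
    (hpre : IntegrableOn (simplexProd (prefRev f (j + 1)))
      (simplexTo (prefRev f (j + 1)).length t))
    (hsuf : IntegrableOn (simplexProd (suff f m (j + 1)))
      (simplexTo (suff f m (j + 1)).length t)) :
    itIntegralTo (prefRev f (j + 1)) t * itIntegralTo (suff f m (j + 1)) t =
      (∫ w in peakSet m j t, ∏ k : Fin m, f (k + 1) (w k)) +
        ∫ w in peakSet m (j + 1) t, ∏ k : Fin m, f (k + 1) (w k) := by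
  rw [itIntegralTo_prefRev, itIntegralTo_suff]
  exact setIntegral_ascSimplex_mul_simplexTo h (fun k => f (k + 1))
    ((integrableOn_prefRev_iff f t _).1 hpre) ((integrableOn_suff_iff f t m _).1 hsuf)

end Words

lemma sum_Icc_neg_one_pow_mul_add {R : Type*} [CommRing R] (Q : ℕ → R) (n : ℕ) :
    ∑ i ∈ Finset.Icc 1 n, (-1 : R) ^ (i - 1) * (Q (i - 1) + Q i) =
      Q 0 + (-1) ^ (n + 1) * Q n := by
  induction n with
  | zero => simp
  | succ n ih =>
    rw [Finset.sum_Icc_succ_top (Nat.le_add_left 1 n), ih, Nat.add_sub_cancel, pow_succ, pow_succ]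
    ring

theorem stmt3 (m : ℕ) (hm : 1 ≤ m) (f : ℕ → ℝ → ℝ)
    (hInt : ∀ i ≤ m,
      IntegrableOn (simplexProd (prefRev f i)) (simplexTo (prefRev f i).length 1) volume ∧
      IntegrableOn (simplexProd (suff f m i)) (simplexTo (suff f m i).length 1) volume) :
    itIntegral ((List.range m).map fun l => f (l + 1)) +
        (-1 : ℝ) ^ m * itIntegral (((List.range m).map fun l => f (l + 1)).reverse) =
      ∑ i ∈ Finset.Icc 1 (m - 1),
        (-1 : ℝ) ^ (i - 1) * itIntegral (prefRev f i) * itIntegral (suff f m i) := by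
  let P (p : ℕ) : ℝ := ∫ w in peakSet m p 1, ∏ k : Fin m, f (k + 1) (w k)
  have hfirst : itIntegral ((List.range m).map fun l => f (l + 1)) = P 0 := by
    rw [itIntegral, itIntegralTo_map_range, ← peakSet_zero]
  have hlast : itIntegral (((List.range m).map fun l => f (l + 1)).reverse) = P (m - 1) := by
    rw [← prefRev, itIntegral, itIntegralTo_prefRev, ← peakSet_sub_one]
  have hterm : ∀ i ∈ Finset.Icc 1 (m - 1),
      (-1 : ℝ) ^ (i - 1) * itIntegral (prefRev f i) * itIntegral (suff f m i) =
        (-1) ^ (i - 1) * (P (i - 1) + P i) := fun i hi => by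
    rw [Finset.mem_Icc] at hi
    obtain ⟨j, rfl⟩ : ∃ j, i = j + 1 := ⟨i - 1, by omega⟩
    have hj : j + 1 < m := by omega
    rw [mul_assoc, itIntegral, itIntegral, Nat.add_sub_cancel,
      itIntegralTo_prefRev_mul_suff f 1 hj (hInt _ hj.le).1 (hInt _ hj.le).2]
  rw [hfirst, hlast, Finset.sum_congr rfl hterm, sum_Icc_neg_one_pow_mul_add, Nat.sub_add_cancel hm]
end

section
/- Let s_1,…,s_m and n, p be positive integers and let t ∈ [0,1). Define I_q(N) := ∫_{0<t_q<⋯<t_1<t} (dt_1/(1−t_1)) ⋯ (dt_{q−1}/(1−t_{q−1})) · (t_q^N dt_q/(1−t_q)). Then ∫_{0<t_p<⋯<t_1<t} (dt_1/(1−t_1)) ⋯ (dt_{p−1}/(1−t_{p−1})) · (ζ_n^⋆(s_1,…,s_{m−1},s_m; t_p) dt_p/(1−t_p)) = Σ_{j=1}^p (−1)^{j−1} I_{p−j+1}(0) · ζ_n^⋆(s_1,…,s_m,{1}_{j−1}) + (−1)^p ζ_n^⋆(s_1,…,s_m,{1}_p; t). -/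
open MeasureTheory

/-- Parametric multiple harmonic star sum
`ζ_n^⋆(s₁,…,s_m; x) = ∑_{n ≥ n₁ ≥ ⋯ ≥ n_m ≥ 1} x^{n_m} / (n₁^{s₁} ⋯ n_m^{s_m})`,
with `ζ_n^⋆(∅; x) = x^n`; the unparametrized star sum is obtained at `x = 1`. -/
noncomputable def pStar : List ℕ → ℕ → ℝ → ℝ
  | [], n, x => x ^ n
  | s :: rest, n, x => ∑ k ∈ Finset.Icc 1 n, 1 / (k : ℝ) ^ s * pStar rest k x

/-- `I_q(N) = ∫_{0<t_q<⋯<t₁<t} dt₁/(1-t₁) ⋯ dt_{q-1}/(1-t_{q-1}) · t_q^N dt_q/(1-t_q)`. -/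
noncomputable def Iq (q N : ℕ) (t : ℝ) : ℝ :=
  itIntegralTo
    (List.replicate (q - 1) (fun u : ℝ => 1 / (1 - u)) ++ [fun u : ℝ => u ^ N / (1 - u)]) t

/-!
Integrating out the outermost variable (Fubini on the simplex) shows that an iterated integral
whose first form is `dt/(1-t)` equals `∫₀ᵗ F(x) dx/(1-x)`, where `F` is the iterated integral of
the remaining word. Hence the identity follows by induction on `p` once the right-hand side
`R_p(t)` is known to satisfy `R_p(0) = 0` and `R_p' = R_{p-1}/(1-t)`. This comes down to
`d/dt ζ_n^⋆(s,1;t) = (ζ_n^⋆(s;1) - ζ_n^⋆(s;t))/(1-t)`, a telescoped geometric sum, and to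
`I_q(0) = (-log(1-t))^q/q!`, which is the same induction with `R_0 = 1`.
-/

open Set

lemma measurableSet_simplexTo (N : ℕ) (t : ℝ) : MeasurableSet (simplexTo N t) := by
  simp only [simplexTo, ofPred_and, ofPred_forall]
  refine .inter (.iInter fun i => ?_) (.iInter fun i => .iInter fun j => ?_)
  · exact (measurableSet_lt measurable_const (measurable_pi_apply i)).inter
      (measurableSet_lt (measurable_pi_apply i) measurable_const)
  by_cases hij : i < j
  · simpa [hij] using measurableSet_lt (measurable_pi_apply j) (measurable_pi_apply i)
  · simp [hij]

lemma cons_mem_simplexTo_succ {N : ℕ} {t x : ℝ} {v : Fin N → ℝ} :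
    Fin.cons x v ∈ simplexTo (N + 1) t ↔ x ∈ Ioo 0 t ∧ v ∈ simplexTo N x := by
  simp only [simplexTo, mem_ofPred_eq, Fin.forall_fin_succ, Fin.cons_zero, Fin.cons_succ,
    Fin.succ_lt_succ_iff, Fin.not_lt_zero, Fin.succ_pos, mem_Ioo]
  grind

lemma integrableOn_simplexTo_prod {fs : List (ℝ → ℝ)} {t : ℝ}
    (hfs : ∀ f ∈ fs, ContinuousOn f (Icc 0 t)) :
    IntegrableOn (fun u => ∏ i : Fin fs.length, fs.get i (u i)) (simplexTo fs.length t) := by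
  have hcont : ContinuousOn (fun u : Fin fs.length → ℝ => ∏ i, fs.get i (u i))
      (univ.pi fun _ => Icc 0 t) :=
    continuousOn_finsetProd _ fun i _ =>
      (hfs _ (fs.get_mem i)).comp (continuous_apply i).continuousOn fun u hu => hu i (mem_univ i)
  exact (hcont.integrableOn_compact (isCompact_univ_pi fun _ => isCompact_Icc)).mono_set
    fun u hu i _ => ⟨(hu.1 i).1.le, (hu.1 i).2.le⟩

theorem setIntegral_simplexTo_succ {N : ℕ} {t : ℝ} {F : (Fin (N + 1) → ℝ) → ℝ}
    (hF : IntegrableOn F (simplexTo (N + 1) t)) :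
    ∫ u in simplexTo (N + 1) t, F u = ∫ x in Ioo 0 t, ∫ v in simplexTo N x, F (Fin.cons x v) := by
  have he := (volume_preserving_piFinSuccAbove (fun _ : Fin (N + 1) => ℝ) 0).symm
  have hcons : ∀ p : ℝ × (Fin N → ℝ),
      (MeasurableEquiv.piFinSuccAbove (fun _ : Fin (N + 1) => ℝ) 0).symm p = Fin.cons p.1 p.2 :=
    fun p => by
      simp [MeasurableEquiv.piFinSuccAbove_symm_apply, Fin.insertNthEquiv, Fin.insertNth_zero']
  have hsplit : ∀ x v, (simplexTo (N + 1) t).indicator F (Fin.cons x v) =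
      (Ioo 0 t).indicator (fun x => (simplexTo N x).indicator (fun v => F (Fin.cons x v)) v) x := by
    intro x v
    by_cases hx : x ∈ Ioo 0 t <;> by_cases hv : v ∈ simplexTo N x <;>
      simp [indicator, cons_mem_simplexTo_succ, hx, hv]
  have hint := (he.integrable_comp_emb (MeasurableEquiv.measurableEmbedding _)).mpr
    ((integrable_indicator_iff (measurableSet_simplexTo _ t)).mpr hF)
  rw [Function.comp_def] at hint
  rw [← integral_indicator (measurableSet_simplexTo _ t), ← he.integral_comp',
    Measure.volume_eq_prod, integral_prod _ hint, ← integral_indicator measurableSet_Ioo]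
  refine integral_congr_ae (.of_forall fun x => ?_)
  simp only [hcons, hsplit]
  by_cases hx : x ∈ Ioo 0 t
  · simp [indicator_of_mem hx, integral_indicator (measurableSet_simplexTo N x)]
  · simp [indicator_of_notMem hx]

theorem itIntegralTo_cons {f : ℝ → ℝ} {fs : List (ℝ → ℝ)} {t : ℝ}
    (hcont : ∀ g ∈ f :: fs, ContinuousOn g (Icc 0 t)) :
    itIntegralTo (f :: fs) t = ∫ x in Ioo 0 t, f x * itIntegralTo fs x := by
  refine (setIntegral_simplexTo_succ (integrableOn_simplexTo_prod hcont)).trans ?_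
  refine setIntegral_congr_fun measurableSet_Ioo fun x _ => ?_
  rw [itIntegralTo, ← integral_const_mul]
  refine setIntegral_congr_fun (measurableSet_simplexTo _ x) fun v _ => ?_
  exact Fin.prod_univ_succ fun i : Fin (fs.length + 1) =>
    (f :: fs).get i ((Fin.cons x v : Fin (fs.length + 1) → ℝ) i)

lemma itIntegralTo_nil (t : ℝ) : itIntegralTo [] t = 1 := by
  simp [itIntegralTo, simplexTo, Measure.real, volume_pi]

lemma setIntegral_Ioo_eq_sub_of_hasDerivAt {F F' : ℝ → ℝ} {t : ℝ} (ht : 0 ≤ t)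
    (hF : ∀ x ∈ Icc 0 t, HasDerivAt F (F' x) x) (hF' : ContinuousOn F' (Icc 0 t)) :
    ∫ x in Ioo 0 t, F' x = F t - F 0 := by
  rw [← integral_Ioc_eq_integral_Ioo, ← intervalIntegral.integral_of_le ht]
  rw [← uIcc_of_le ht] at hF hF'
  exact intervalIntegral.integral_eq_sub_of_hasDerivAt hF hF'.intervalIntegrable

lemma continuousOn_div_one_sub {g : ℝ → ℝ} (hg : ContinuousOn g (Iio 1)) :
    ContinuousOn (fun u => g u / (1 - u)) (Iio 1) :=
  hg.div (continuousOn_const.sub continuousOn_id) fun _ hu => (sub_pos.2 hu).ne'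

theorem itIntegralTo_replicate_append {R : ℕ → ℝ → ℝ} (hR₀ : ContinuousOn (R 0) (Iio 1))
    (hR : ∀ p, ∀ x < 1, HasDerivAt (R (p + 1)) (R p x / (1 - x)) x)
    (hR_zero : ∀ p, R (p + 1) 0 = 0) (p : ℕ) {t : ℝ} (ht₀ : 0 ≤ t) (ht₁ : t < 1) :
    itIntegralTo (List.replicate p (fun u => 1 / (1 - u)) ++ [fun u => R 0 u / (1 - u)]) t =
      R (p + 1) t := by
  have hcont : ∀ p, ContinuousOn (fun u => R p u / (1 - u)) (Iio 1) := by
    rintro (_ | p)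
    · exact continuousOn_div_one_sub hR₀
    · exact continuousOn_div_one_sub fun x hx => (hR p x hx).continuousAt.continuousWithinAt
  have hprimitive : ∀ p, ∀ {t : ℝ}, 0 ≤ t → t < 1 →
      ∫ x in Ioo 0 t, R p x / (1 - x) = R (p + 1) t := fun p t ht₀ ht₁ => by
    rw [setIntegral_Ioo_eq_sub_of_hasDerivAt ht₀ (fun x hx => hR p x (hx.2.trans_lt ht₁))
      ((hcont p).mono fun x hx => hx.2.trans_lt ht₁), hR_zero, sub_zero]
  have hword : ∀ q {t : ℝ}, t < 1 →
      ∀ g ∈ List.replicate q (fun u => 1 / (1 - u)) ++ [fun u => R 0 u / (1 - u)],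
      ContinuousOn g (Icc 0 t) := by
    intro q t ht₁ g hg
    refine ContinuousOn.mono ?_ fun x hx => hx.2.trans_lt ht₁
    rcases List.mem_append.1 hg with hg | hg
    · rw [List.eq_of_mem_replicate hg]
      exact continuousOn_div_one_sub continuousOn_const
    · rw [List.mem_singleton.1 hg]
      exact hcont 0
  induction p generalizing t with
  | zero =>
    rw [List.replicate_zero, List.nil_append, itIntegralTo_cons (hword 0 ht₁)]
    simp only [itIntegralTo_nil, mul_one]
    exact hprimitive 0 ht₀ ht₁
  | succ p ih =>
    rw [List.replicate_succ, List.cons_append,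
      itIntegralTo_cons (fs := _ ++ _) (hword (p + 1) ht₁),
      setIntegral_congr_fun measurableSet_Ioo fun x hx => by rw [ih hx.1.le (hx.2.trans ht₁)]]
    simp only [one_div_mul_eq_div]
    exact hprimitive (p + 1) ht₀ ht₁

open Nat in
noncomputable def negLogPowDiv (q : ℕ) (x : ℝ) : ℝ := (-Real.log (1 - x)) ^ q / q !

lemma negLogPowDiv_zero : negLogPowDiv 0 = fun _ => 1 := by
  ext x
  simp [negLogPowDiv]

lemma negLogPowDiv_succ_apply_zero (q : ℕ) : negLogPowDiv (q + 1) 0 = 0 := by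
  simp [negLogPowDiv]

lemma hasDerivAt_negLogPowDiv (q : ℕ) {x : ℝ} (hx : x < 1) :
    HasDerivAt (negLogPowDiv (q + 1)) (negLogPowDiv q x / (1 - x)) x := by
  have hlog : HasDerivAt (fun y => -Real.log (1 - y)) (1 / (1 - x)) x := by
    simpa [neg_div] using (((hasDerivAt_id x).const_sub 1).log (sub_pos.2 hx).ne').fun_neg
  refine ((hlog.fun_pow (q + 1)).div_const ((q + 1).factorial : ℝ)).congr_deriv ?_
  simp only [negLogPowDiv, Nat.factorial_succ, Nat.add_sub_cancel]
  push_cast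
  field_simp

theorem Iq_zero_eq_negLogPowDiv {q : ℕ} (hq : 1 ≤ q) {t : ℝ} (ht₀ : 0 ≤ t) (ht₁ : t < 1) :
    Iq q 0 t = negLogPowDiv q t := by
  obtain ⟨q, rfl⟩ := Nat.exists_eq_add_of_le' hq
  have hlast : (fun u : ℝ => u ^ 0 / (1 - u)) = fun u => negLogPowDiv 0 u / (1 - u) := by
    simp [negLogPowDiv_zero]
  rw [Iq, Nat.add_sub_cancel, hlast]
  exact itIntegralTo_replicate_append (by simpa [negLogPowDiv_zero] using continuousOn_const)
    (fun q _ hx => hasDerivAt_negLogPowDiv q hx) negLogPowDiv_succ_apply_zero q ht₀ ht₁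

lemma continuous_pStar (s : List ℕ) (n : ℕ) : Continuous (pStar s n) := by
  induction s generalizing n with
  | nil => exact continuous_pow n
  | cons a s ih => exact continuous_finsetSum _ fun k _ => continuous_const.mul (ih k)

lemma pStar_apply_zero {s : List ℕ} (hs : s ≠ []) (n : ℕ) : pStar s n 0 = 0 := by
  induction s generalizing n with
  | nil => exact absurd rfl hs
  | cons a s ih =>
    refine Finset.sum_eq_zero fun k hk => ?_
    rcases eq_or_ne s [] with rfl | hs
    · simp [pStar, Nat.one_le_iff_ne_zero.1 (Finset.mem_Icc.1 hk).1]
    · simp [ih hs]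

lemma hasDerivAt_pStar_singleton_one (n : ℕ) {x : ℝ} (hx : x ≠ 1) :
    HasDerivAt (pStar [1] n) ((1 - x ^ n) / (1 - x)) x := by
  have h1x : 1 - x ≠ 0 := sub_ne_zero.2 hx.symm
  induction n with
  | zero => simpa [pStar] using hasDerivAt_const x (0 : ℝ)
  | succ n ih =>
    have hsplit : pStar [1] (n + 1) = fun y => pStar [1] n y + 1 / (n + 1 : ℝ) * y ^ (n + 1) := by
      ext y
      simp [pStar, Finset.sum_Icc_succ_top]
    rw [hsplit]
    refine (ih.add ((hasDerivAt_pow (n + 1) x).const_mul _)).congr_deriv ?_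
    rw [Nat.add_sub_cancel]
    push_cast
    field_simp
    ring

lemma hasDerivAt_pStar_append_one (s : List ℕ) (n : ℕ) {x : ℝ} (hx : x ≠ 1) :
    HasDerivAt (pStar (s ++ [1]) n) ((pStar s n 1 - pStar s n x) / (1 - x)) x := by
  induction s generalizing n with
  | nil => simpa [pStar] using hasDerivAt_pStar_singleton_one n hx
  | cons a s ih =>
    refine (HasDerivAt.fun_sum fun k _ => (ih k).const_mul (1 / (k : ℝ) ^ a)).congr_deriv ?_
    simp only [pStar, ← Finset.sum_sub_distrib, Finset.sum_div]
    exact Finset.sum_congr rfl fun k _ => by ring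

-- `R_p(x)` of the proof idea, with `R_0(x) = ζ_n^⋆(s; x)`.
noncomputable def pStarPrimitive (s : List ℕ) (n p : ℕ) (x : ℝ) : ℝ :=
  (∑ i ∈ Finset.range p,
      (-1) ^ i * negLogPowDiv (p - i) x * pStar (s ++ List.replicate i 1) n 1) +
    (-1) ^ p * pStar (s ++ List.replicate p 1) n x

lemma pStarPrimitive_zero (s : List ℕ) (n : ℕ) : pStarPrimitive s n 0 = pStar s n := by
  ext x
  simp [pStarPrimitive]

lemma pStarPrimitive_succ_apply_zero (s : List ℕ) (n p : ℕ) :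
    pStarPrimitive s n (p + 1) 0 = 0 := by
  rw [pStarPrimitive, pStar_apply_zero (by simp), mul_zero, add_zero]
  exact Finset.sum_eq_zero fun i hi => by
    rw [Nat.sub_add_comm (Finset.mem_range_succ_iff.1 hi), negLogPowDiv_succ_apply_zero,
      mul_zero, zero_mul]

lemma hasDerivAt_pStarPrimitive (s : List ℕ) (n p : ℕ) {x : ℝ} (hx : x < 1) :
    HasDerivAt (pStarPrimitive s n (p + 1)) (pStarPrimitive s n p x / (1 - x)) x := by
  have hsum := HasDerivAt.fun_sum (u := Finset.range (p + 1)) fun i hi =>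
    (((hasDerivAt_negLogPowDiv (p - i) hx).const_mul ((-1 : ℝ) ^ i)).mul_const
      (pStar (s ++ List.replicate i 1) n 1))
  have hlast := (hasDerivAt_pStar_append_one (s ++ List.replicate p 1) n hx.ne).const_mul
    ((-1 : ℝ) ^ (p + 1))
  rw [List.append_assoc, ← List.replicate_succ'] at hlast
  have hfun : pStarPrimitive s n (p + 1) = fun y =>
      (∑ i ∈ Finset.range (p + 1),
        (-1) ^ i * negLogPowDiv (p - i + 1) y * pStar (s ++ List.replicate i 1) n 1) +
      (-1) ^ (p + 1) * pStar (s ++ List.replicate (p + 1) 1) n y := by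
    ext y
    refine congrArg (· + _) (Finset.sum_congr rfl fun i hi => ?_)
    rw [Nat.sub_add_comm (Finset.mem_range_succ_iff.1 hi)]
  rw [hfun]
  refine (hsum.add hlast).congr_deriv ?_
  rw [Finset.sum_range_succ, Nat.sub_self, negLogPowDiv_zero, pStarPrimitive, add_div,
    Finset.sum_div]
  simp only [mul_div_assoc', div_mul_eq_mul_div, pow_succ]
  ring

theorem itIntegralTo_replicate_append_pStar (s : List ℕ) (n p : ℕ) {t : ℝ} (ht₀ : 0 ≤ t)
    (ht₁ : t < 1) :
    itIntegralTo (List.replicate p (fun u : ℝ => 1 / (1 - u)) ++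
        [fun u : ℝ => pStar s n u / (1 - u)]) t = pStarPrimitive s n (p + 1) t := by
  have h := itIntegralTo_replicate_append (R := pStarPrimitive s n)
    (by simpa only [pStarPrimitive_zero] using (continuous_pStar s n).continuousOn)
    (fun p _ hx => hasDerivAt_pStarPrimitive s n p hx) (pStarPrimitive_succ_apply_zero s n)
    p ht₀ ht₁
  rwa [pStarPrimitive_zero] at h

theorem stmt6_general (s : List ℕ) (n : ℕ) (p : ℕ) (hp : 1 ≤ p) (t : ℝ) (ht : 0 ≤ t ∧ t < 1) :
    itIntegralTo
        (List.replicate (p - 1) (fun u : ℝ => 1 / (1 - u)) ++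
          [fun u : ℝ => pStar s n u / (1 - u)]) t =
      (∑ j ∈ Finset.Icc 1 p, (-1 : ℝ) ^ (j - 1) * Iq (p - j + 1) 0 t *
        pStar (s ++ List.replicate (j - 1) 1) n 1) +
      (-1 : ℝ) ^ p * pStar (s ++ List.replicate p 1) n t := by
  obtain ⟨m, rfl⟩ := Nat.exists_eq_add_of_le' hp
  rw [Nat.add_sub_cancel, itIntegralTo_replicate_append_pStar s n m ht.1 ht.2, pStarPrimitive,
    ← Finset.Ico_add_one_right_eq_Icc, Finset.sum_Ico_eq_sum_range, Nat.add_sub_cancel]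
  refine congrArg (· + _) (Finset.sum_congr rfl fun i hi => ?_)
  have hi_lt : i < m + 1 := Finset.mem_range.1 hi
  rw [Nat.add_sub_cancel_left, show m + 1 - (1 + i) + 1 = m + 1 - i by omega,
    Iq_zero_eq_negLogPowDiv (by omega) ht.1 ht.2]

theorem stmt6 (s : List ℕ) (hs : s ≠ []) (hpos : ∀ x ∈ s, 1 ≤ x)
    (n : ℕ) (hn : 1 ≤ n) (p : ℕ) (hp : 1 ≤ p) (t : ℝ) (ht : 0 ≤ t ∧ t < 1) :
    itIntegralTo
        (List.replicate (p - 1) (fun u : ℝ => 1 / (1 - u)) ++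
          [fun u : ℝ => pStar s n u / (1 - u)]) t =
      (∑ j ∈ Finset.Icc 1 p, (-1 : ℝ) ^ (j - 1) * Iq (p - j + 1) 0 t *
        pStar (s ++ List.replicate (j - 1) 1) n 1) +
      (-1 : ℝ) ^ p * pStar (s ++ List.replicate p 1) n t :=
  stmt6_general s n p hp t ht
end

section
/- The following two linear relations among (alternating) multiple zeta values hold: (i) 6 ζ(3,1,1) + 2 ζ(2,2,1) + ζ(2,1,2) = ζ(2,2,1) + ζ(2,1,2) + ζ(2,3) + ζ(4,1); (ii) 2 ζ(3, 1̄, 1) + 2 ζ(3̄, 1̄, 1̄) + 2 ζ(3̄, 1, 1̄) + ζ(2̄, 2̄, 1̄) + ζ(2̄, 2, 1̄) + ζ(2̄, 1, 2̄) = ζ(2̄, 1, 2) + ζ(2̄, 2, 1) + ζ(2̄, 3) + ζ(4̄, 1). -/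
/-- The `n`-th term `sgn(s)^n / n^{|s|}` of an alternating harmonic series,
where a negative entry `s` encodes a "barred" exponent `|s|` with sign `-1`. -/
noncomputable def zTerm (s : ℤ) (n : ℕ) : ℝ :=
  (if s < 0 then (-1 : ℝ) else 1) ^ n / (n : ℝ) ^ s.natAbs

/-- Alternating multiple harmonic sum
`ζ_n(s₁,…,s_r) = ∑_{n ≥ n₁ > ⋯ > n_r ≥ 1} ∏ sgn(s_j)^{n_j} / n_j^{|s_j|}`. -/
noncomputable def amhs : List ℤ → ℕ → ℝ
  | [], _ => 1
  | s :: rest, n => ∑ k ∈ Finset.Icc 1 n, zTerm s k * amhs rest (k - 1)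

/-- Alternating multiple zeta value `ζ(s₁,…,s_r)`, as the limit of its partial sums. -/
noncomputable def azeta (s : List ℤ) : ℝ := Filter.limUnder Filter.atTop (amhs s)

/-!
Both identities come from evaluating `ζ(2) ζ(y, 1)`, for `y = 2` and `y = 2̄`, in two ways.
Multiplying partial sums termwise (the stuffle product) gives
`ζ(2) ζ(y, 1) = ζ(2, y, 1) + ζ(y, 2, 1) + ζ(y, 1, 2) + ζ(y', 1) + ζ(y, 3)` with `y' = 4` resp. `4̄`.
Expanding the Cauchy product instead, the `n`-th coefficient is
`∑_{m + l = n} m⁻² ε^l l⁻² H_{l-1}`, with `ε = ±1` the sign of `y` and `H` the harmonic numbers.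
The partial fractions `1/(m²l²) = (m⁻² + l⁻²)/n² + 2(m⁻¹ + l⁻¹)/n³` and
`1/(ml) = (m⁻¹ + l⁻¹)/n`, together with the reflection `m ↦ n - m` (which costs a factor `ε^n`
because `ε² = 1`), turn this coefficient into depth-two sums weighted by `n⁻²` and `n⁻³`, so that
summing over `n` produces depth-three values. Comparing the two evaluations gives both identities.
All series involved converge absolutely, because partial sums with nonzero entries grow at most
like `√N`.
-/

open Finset Filter Topology

noncomputable def zSign (s : ℤ) : ℝ := if s < 0 then -1 else 1

/-- `nestedSum [(ε₁, e₁), …, (ε_r, e_r)] n = ∑_{n > n₁ > ⋯ > n_r ≥ 1} ∏ ε_j ^ n_j / n_j ^ e_j`;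
unlike `amhs`, the outer bound is strict. -/
noncomputable def nestedSum : List (ℝ × ℕ) → ℕ → ℝ
  | [], _ => 1
  | (ε, e) :: rest, n => ∑ k ∈ Ico 1 n, ε ^ k / (k : ℝ) ^ e * nestedSum rest k

lemma nestedSum_cons (ε : ℝ) (e : ℕ) (L : List (ℝ × ℕ)) (n : ℕ) :
    nestedSum ((ε, e) :: L) n = ∑ k ∈ Ico 1 n, ε ^ k / (k : ℝ) ^ e * nestedSum L k :=
  rfl

lemma nestedSum_singleton (ε : ℝ) (e n : ℕ) :
    nestedSum [(ε, e)] n = ∑ k ∈ Ico 1 n, ε ^ k / (k : ℝ) ^ e := by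
  simp [nestedSum]

lemma amhs_eq_nestedSum (s : List ℤ) (N : ℕ) :
    amhs s N = nestedSum (s.map fun x => (zSign x, x.natAbs)) (N + 1) := by
  induction s generalizing N with
  | nil => rfl
  | cons x s ih =>
    rw [amhs, List.map_cons, nestedSum_cons, Ico_add_one_right_eq_Icc]
    refine sum_congr rfl fun k hk => ?_
    rw [ih, Nat.sub_add_cancel (mem_Icc.1 hk).1]
    rfl

lemma pow_sub_eq_mul_of_sq_eq_one {M : Type*} [CommMonoid M] {ε : M} (hε : ε ^ 2 = 1) {m n : ℕ}
    (h : m ≤ n) : ε ^ (n - m) = ε ^ n * ε ^ m := by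
  rw [← Nat.sub_add_cancel h, pow_add, Nat.add_sub_cancel, mul_assoc, ← pow_add, ← two_mul,
    pow_mul, hε, one_pow, mul_one]

lemma sum_Ico_one_reflect {M : Type*} [AddCommMonoid M] (f : ℕ → M) (n : ℕ) :
    ∑ m ∈ Ico 1 n, f (n - m) = ∑ m ∈ Ico 1 n, f m := by
  rw [sum_Ico_reflect f 1 (Nat.le_succ n), Nat.add_sub_cancel_left, Nat.add_sub_cancel]

lemma sum_Ico_reflect_pow_mul {R : Type*} [CommRing R] {ε : R} (hε : ε ^ 2 = 1) (g : ℕ → R)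
    (n : ℕ) :
    ∑ m ∈ Ico 1 n, ε ^ m * g (n - m) = ε ^ n * ∑ m ∈ Ico 1 n, ε ^ m * g m := by
  rw [mul_sum, ← sum_Ico_one_reflect (fun j => ε ^ n * (ε ^ j * g j))]
  refine sum_congr rfl fun m hm => ?_
  rw [pow_sub_eq_mul_of_sq_eq_one hε (mem_Ico.1 hm).2.le]
  have hεn : ε ^ n * ε ^ n = 1 := by rw [← pow_add, ← two_mul, pow_mul, hε, one_pow]
  linear_combination (-(ε ^ m * g (n - m))) * hεn

lemma sum_Ico_sum_Ico_sub {M : Type*} [AddCommMonoid M] (f : ℕ → ℕ → M) (n : ℕ) :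
    ∑ m ∈ Ico 1 n, ∑ l ∈ Ico 1 (n - m), f m l = ∑ k ∈ Ico 1 n, ∑ m ∈ Ico 1 k, f m (k - m) := by
  induction n with
  | zero => rfl
  | succ n ih =>
    rcases Nat.eq_zero_or_pos n with rfl | hn
    · rfl
    rw [sum_Ico_succ_top hn, sum_Ico_succ_top hn, ← ih, Nat.add_sub_cancel_left, Ico_self,
      sum_empty, add_zero, ← sum_add_distrib]
    refine sum_congr rfl fun m hm => ?_
    obtain ⟨-, hmn⟩ := mem_Ico.1 hm
    rw [Nat.sub_add_comm hmn.le, sum_Ico_succ_top (by omega)]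

lemma sum_Ico_pow_div_div_sub {ε : ℝ} (hε : ε ^ 2 = 1) (k : ℕ) :
    ∑ m ∈ Ico 1 k, ε ^ m / (m : ℝ) / ((k - m : ℕ) : ℝ)
      = (1 + ε ^ k) / k * nestedSum [(ε, 1)] k := by
  have hpf : ∀ m ∈ Ico 1 k, ε ^ m / (m : ℝ) / ((k - m : ℕ) : ℝ)
      = (ε ^ m / m + ε ^ m * (1 / ((k - m : ℕ) : ℝ))) / k := by
    intro m hm
    obtain ⟨h1, h2⟩ := mem_Ico.1 hm
    have hm0 : (m : ℝ) ≠ 0 := Nat.cast_ne_zero.2 (by omega)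
    have hl0 : ((k - m : ℕ) : ℝ) ≠ 0 := Nat.cast_ne_zero.2 (by omega)
    rw [← Nat.add_sub_of_le h2.le, Nat.cast_add, Nat.add_sub_cancel_left]
    field_simp
    ring
  rw [sum_congr rfl hpf, ← sum_div, sum_add_distrib,
    sum_Ico_reflect_pow_mul hε (fun j : ℕ => 1 / (j : ℝ)), nestedSum_singleton]
  simp only [pow_one, mul_one_div]
  ring

lemma sum_Ico_pow_div_sq_div_sub {ε : ℝ} (hε : ε ^ 2 = 1) (k : ℕ) :
    ∑ m ∈ Ico 1 k, ε ^ m / (m : ℝ) ^ 2 / ((k - m : ℕ) : ℝ)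
      = nestedSum [(ε, 2)] k / k + (1 + ε ^ k) / k ^ 2 * nestedSum [(ε, 1)] k := by
  have hpf : ∀ m ∈ Ico 1 k, ε ^ m / (m : ℝ) ^ 2 / ((k - m : ℕ) : ℝ)
      = ε ^ m / m ^ 2 / k + (ε ^ m / m + ε ^ m * (1 / ((k - m : ℕ) : ℝ))) / k ^ 2 := by
    intro m hm
    obtain ⟨h1, h2⟩ := mem_Ico.1 hm
    have hm0 : (m : ℝ) ≠ 0 := Nat.cast_ne_zero.2 (by omega)
    have hl0 : ((k - m : ℕ) : ℝ) ≠ 0 := Nat.cast_ne_zero.2 (by omega)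
    rw [← Nat.add_sub_of_le h2.le, Nat.cast_add, Nat.add_sub_cancel_left]
    field_simp
    ring
  rw [sum_congr rfl hpf, sum_add_distrib, ← sum_div, ← sum_div, sum_add_distrib,
    sum_Ico_reflect_pow_mul hε (fun j : ℕ => 1 / (j : ℝ)), nestedSum_singleton, nestedSum_singleton]
  simp only [pow_one, mul_one_div]
  ring

lemma sum_Ico_mul_harmonic (f : ℕ → ℝ) (n : ℕ) :
    ∑ m ∈ Ico 1 n, f m * nestedSum [(1, 1)] (n - m)
      = ∑ k ∈ Ico 1 n, ∑ m ∈ Ico 1 k, f m / ((k - m : ℕ) : ℝ) := by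
  simp only [nestedSum_singleton, one_pow, pow_one, mul_sum, ← div_eq_mul_one_div]
  exact sum_Ico_sum_Ico_sub (fun m l => f m / (l : ℝ)) n

lemma sum_Ico_pow_div_mul_harmonic {ε : ℝ} (hε : ε ^ 2 = 1) (n : ℕ) :
    ∑ m ∈ Ico 1 n, ε ^ m / (m : ℝ) * nestedSum [(1, 1)] (n - m)
      = nestedSum [(1, 1), (ε, 1)] n + nestedSum [(ε, 1), (ε, 1)] n := by
  rw [sum_Ico_mul_harmonic (fun m => ε ^ m / (m : ℝ)), nestedSum_cons, nestedSum_cons,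
    ← sum_add_distrib]
  refine sum_congr rfl fun k _ => ?_
  rw [sum_Ico_pow_div_div_sub hε]
  ring

lemma sum_Ico_pow_div_sq_mul_harmonic {ε : ℝ} (hε : ε ^ 2 = 1) (n : ℕ) :
    ∑ m ∈ Ico 1 n, ε ^ m / (m : ℝ) ^ 2 * nestedSum [(1, 1)] (n - m)
      = nestedSum [(1, 1), (ε, 2)] n + nestedSum [(1, 2), (ε, 1)] n
        + nestedSum [(ε, 2), (ε, 1)] n := by
  rw [sum_Ico_mul_harmonic (fun m => ε ^ m / (m : ℝ) ^ 2), nestedSum_cons, nestedSum_cons,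
    nestedSum_cons, ← sum_add_distrib, ← sum_add_distrib]
  refine sum_congr rfl fun k _ => ?_
  rw [sum_Ico_pow_div_sq_div_sub hε]
  ring

noncomputable def cauchyTerm (ε : ℝ) (n : ℕ) : ℝ :=
  ∑ m ∈ Ico 1 n,
    1 / (m : ℝ) ^ 2 * (ε ^ (n - m) / ((n - m : ℕ) : ℝ) ^ 2 * nestedSum [(1, 1)] (n - m))

lemma sum_Ico_pow_sub_div_mul_harmonic {ε : ℝ} (hε : ε ^ 2 = 1) (a n : ℕ) :
    ∑ m ∈ Ico 1 n, ε ^ (n - m) / (m : ℝ) ^ a * nestedSum [(1, 1)] (n - m)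
      = ε ^ n * ∑ m ∈ Ico 1 n, ε ^ m / (m : ℝ) ^ a * nestedSum [(1, 1)] (n - m) := by
  rw [mul_sum]
  refine sum_congr rfl fun m hm => ?_
  rw [pow_sub_eq_mul_of_sq_eq_one hε (mem_Ico.1 hm).2.le]
  ring

lemma cauchyTerm_eq {ε : ℝ} (hε : ε ^ 2 = 1) (n : ℕ) :
    cauchyTerm ε n
      = ε ^ n / (n : ℝ) ^ 2 * (nestedSum [(1, 1), (ε, 2)] n + nestedSum [(1, 2), (ε, 1)] n
          + nestedSum [(ε, 2), (ε, 1)] n)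
        + 1 / (n : ℝ) ^ 2 * nestedSum [(ε, 2), (1, 1)] n
        + 2 * (ε ^ n / (n : ℝ) ^ 3 * (nestedSum [(1, 1), (ε, 1)] n + nestedSum [(ε, 1), (ε, 1)] n))
        + 2 * (1 / (n : ℝ) ^ 3 * nestedSum [(ε, 1), (1, 1)] n) := by
  set F : ℕ → ℕ → ℝ := fun a j => ε ^ j / (j : ℝ) ^ a * nestedSum [(1, 1)] j
  have hpf : ∀ m ∈ Ico 1 n,
      1 / (m : ℝ) ^ 2 * (ε ^ (n - m) / ((n - m : ℕ) : ℝ) ^ 2 * nestedSum [(1, 1)] (n - m))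
        = (ε ^ (n - m) / (m : ℝ) ^ 2 * nestedSum [(1, 1)] (n - m) + F 2 (n - m)) / (n : ℝ) ^ 2
          + 2 * (ε ^ (n - m) / (m : ℝ) ^ 1 * nestedSum [(1, 1)] (n - m) + F 1 (n - m))
            / (n : ℝ) ^ 3 := by
    intro m hm
    obtain ⟨h1, h2⟩ := mem_Ico.1 hm
    have hm0 : (m : ℝ) ≠ 0 := Nat.cast_ne_zero.2 (by omega)
    have hl0 : ((n - m : ℕ) : ℝ) ≠ 0 := Nat.cast_ne_zero.2 (by omega)
    simp only [F]
    rw [← Nat.add_sub_of_le h2.le, Nat.cast_add, Nat.add_sub_cancel_left]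
    field_simp
    ring
  rw [cauchyTerm, sum_congr rfl hpf, sum_add_distrib, ← sum_div, ← sum_div, ← mul_sum,
    sum_add_distrib, sum_add_distrib, sum_Ico_one_reflect (F 2), sum_Ico_one_reflect (F 1),
    sum_Ico_pow_sub_div_mul_harmonic hε, sum_Ico_pow_sub_div_mul_harmonic hε]
  simp only [pow_one]
  rw [sum_Ico_pow_div_sq_mul_harmonic hε, sum_Ico_pow_div_mul_harmonic hε]
  simp only [F, nestedSum_cons, pow_one]
  ring

lemma sum_Ico_cauchyTerm {ε : ℝ} (hε : ε ^ 2 = 1) (N : ℕ) :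
    ∑ n ∈ Ico 1 N, cauchyTerm ε n
      = nestedSum [(ε, 2), (1, 1), (ε, 2)] N + nestedSum [(ε, 2), (1, 2), (ε, 1)] N
        + nestedSum [(ε, 2), (ε, 2), (ε, 1)] N + nestedSum [(1, 2), (ε, 2), (1, 1)] N
        + 2 * nestedSum [(ε, 3), (1, 1), (ε, 1)] N + 2 * nestedSum [(ε, 3), (ε, 1), (ε, 1)] N
        + 2 * nestedSum [(1, 3), (ε, 1), (1, 1)] N := by
  simp only [nestedSum_cons _ _ [_, _], mul_sum, ← sum_add_distrib]
  refine sum_congr rfl fun n _ => ?_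
  rw [cauchyTerm_eq hε]
  ring

lemma amhs_nil (n : ℕ) : amhs [] n = 1 := rfl

lemma amhs_cons_succ (s : ℤ) (r : List ℤ) (n : ℕ) :
    amhs (s :: r) (n + 1) = amhs (s :: r) n + zTerm s (n + 1) * amhs r n := by
  rw [amhs, sum_Icc_succ_top (by omega), Nat.add_sub_cancel]
  rfl

lemma amhs_mul_amhs_stuffle {x y w : ℤ} (hxy : ∀ k, zTerm x k * zTerm y k = zTerm w k) (n : ℕ) :
    amhs [x] n * amhs [y] n = amhs [x, y] n + amhs [y, x] n + amhs [w] n := by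
  induction n with
  | zero => simp [amhs]
  | succ n ih =>
    simp only [amhs_cons_succ, amhs_nil, mul_one]
    rw [← hxy (n + 1)]
    linear_combination ih

lemma amhs_mul_amhs_pair_stuffle {x y z w v : ℤ} (hxy : ∀ k, zTerm x k * zTerm y k = zTerm w k)
    (hxz : ∀ k, zTerm x k * zTerm z k = zTerm v k) (n : ℕ) :
    amhs [x] n * amhs [y, z] n
      = amhs [x, y, z] n + amhs [y, x, z] n + amhs [y, z, x] n + amhs [w, z] n + amhs [y, v] n := by
  induction n with
  | zero => simp [amhs]
  | succ n ih =>
    simp only [amhs_cons_succ, amhs_nil, mul_one]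
    rw [← hxy (n + 1)]
    linear_combination ih + zTerm y (n + 1) * amhs_mul_amhs_stuffle hxz n

lemma zTerm_mul_zTerm {x y w : ℤ} (hsign : zSign x * zSign y = zSign w)
    (habs : x.natAbs + y.natAbs = w.natAbs) (k : ℕ) : zTerm x k * zTerm y k = zTerm w k := by
  change zSign x ^ k / _ * (zSign y ^ k / _) = zSign w ^ k / _
  rw [← hsign, ← habs, mul_pow, pow_add]
  ring

lemma abs_zTerm (s : ℤ) (k : ℕ) : |zTerm s k| = 1 / (k : ℝ) ^ s.natAbs := by
  have hsign : |(if s < 0 then (-1 : ℝ) else 1)| = 1 := by split_ifs <;> simp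
  rw [zTerm, abs_div, abs_pow, hsign, one_pow, abs_of_nonneg (by positivity)]

lemma zTerm_zero {s : ℤ} (hs : s ≠ 0) : zTerm s 0 = 0 := by
  simp [zTerm, hs]

lemma sum_Icc_one_div_sqrt_le (m : ℕ) : ∑ k ∈ Icc 1 m, 1 / √(k : ℝ) ≤ 2 * √(m : ℝ) := by
  induction m with
  | zero => simp
  | succ m ih =>
    rw [sum_Icc_succ_top (by omega), Nat.cast_succ]
    have hpos : 0 < √((m : ℝ) + 1) := Real.sqrt_pos.2 (by positivity)
    have hstep : 1 / √((m : ℝ) + 1) ≤ 2 * √((m : ℝ) + 1) - 2 * √(m : ℝ) := by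
      rw [div_le_iff₀ hpos]
      nlinarith [sq_nonneg (√(m : ℝ) - √((m : ℝ) + 1)), Real.sq_sqrt (m.cast_nonneg : (0 : ℝ) ≤ m),
        Real.sq_sqrt (by positivity : (0 : ℝ) ≤ m + 1)]
    linarith

lemma abs_amhs_le (r : List ℤ) (hr : ∀ x ∈ r, x ≠ 0) (m : ℕ) :
    |amhs r m| ≤ 2 ^ r.length * √((m : ℝ) + 1) := by
  induction r generalizing m with
  | nil => simp [amhs]
  | cons s r ih =>
    have hs : s ≠ 0 := hr s List.mem_cons_self
    have hterm : ∀ k ∈ Icc 1 m, |zTerm s k * amhs r (k - 1)| ≤ 2 ^ r.length * (1 / √(k : ℝ)) := by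
      intro k hk
      have hk1 : (1 : ℝ) ≤ k := by exact_mod_cast (mem_Icc.1 hk).1
      have hzs : |zTerm s k| ≤ 1 / k := by
        rw [abs_zTerm]
        gcongr
        exact le_self_pow₀ hk1 (Int.natAbs_ne_zero.2 hs)
      have ham : |amhs r (k - 1)| ≤ 2 ^ r.length * √(k : ℝ) := by
        simpa [Nat.cast_sub (mem_Icc.1 hk).1] using
          ih (fun x hx => hr x (List.mem_cons_of_mem s hx)) (k - 1)
      calc |zTerm s k * amhs r (k - 1)| ≤ 1 / k * (2 ^ r.length * √(k : ℝ)) := by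
            rw [abs_mul]; exact mul_le_mul hzs ham (abs_nonneg _) (by positivity)
        _ = 2 ^ r.length * (1 / √(k : ℝ)) := by
            rw [← Real.sqrt_div_self']; ring
    calc |amhs (s :: r) m| ≤ ∑ k ∈ Icc 1 m, |zTerm s k * amhs r (k - 1)| := abs_sum_le_sum_abs _ _
      _ ≤ ∑ k ∈ Icc 1 m, 2 ^ r.length * (1 / √(k : ℝ)) := sum_le_sum hterm
      _ ≤ 2 ^ r.length * (2 * √(m : ℝ)) := by
          rw [← mul_sum]; gcongr; exact sum_Icc_one_div_sqrt_le m
      _ ≤ 2 ^ (s :: r).length * √((m : ℝ) + 1) := by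
          rw [List.length_cons, pow_succ, mul_assoc]
          gcongr
          linarith

lemma norm_zTerm_mul_amhs_le {s : ℤ} (hs : 2 ≤ s.natAbs) {r : List ℤ} (hr : ∀ x ∈ r, x ≠ 0)
    (k : ℕ) : ‖zTerm s k * amhs r (k - 1)‖ ≤ 2 ^ r.length * (1 / (k : ℝ) ^ (3 / 2 : ℝ)) := by
  rcases Nat.eq_zero_or_pos k with rfl | hk
  · simp [zTerm_zero (s := s) (by omega)]
  have hk1 : (1 : ℝ) ≤ k := by exact_mod_cast hk
  have hzs : |zTerm s k| ≤ 1 / (k : ℝ) ^ 2 := by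
    rw [abs_zTerm]
    gcongr
  have ham : |amhs r (k - 1)| ≤ 2 ^ r.length * √(k : ℝ) := by
    simpa [Nat.cast_sub hk] using abs_amhs_le r hr (k - 1)
  have hpow : (k : ℝ) ^ 2 = (k : ℝ) ^ (3 / 2 : ℝ) * √(k : ℝ) := by
    rw [Real.sqrt_eq_rpow, ← Real.rpow_add (by positivity), ← Real.rpow_natCast]
    norm_num
  calc ‖zTerm s k * amhs r (k - 1)‖ ≤ 1 / (k : ℝ) ^ 2 * (2 ^ r.length * √(k : ℝ)) := by
        rw [Real.norm_eq_abs, abs_mul]; exact mul_le_mul hzs ham (abs_nonneg _) (by positivity)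
    _ = 2 ^ r.length * (1 / (k : ℝ) ^ (3 / 2 : ℝ)) := by
        have : √(k : ℝ) ≠ 0 := by positivity
        rw [hpow]; field_simp

lemma summable_norm_zTerm_mul_amhs {s : ℤ} (hs : 2 ≤ s.natAbs) {r : List ℤ}
    (hr : ∀ x ∈ r, x ≠ 0) : Summable fun k => ‖zTerm s k * amhs r (k - 1)‖ :=
  .of_nonneg_of_le (fun _ => norm_nonneg _) (norm_zTerm_mul_amhs_le hs hr)
    ((Real.summable_one_div_nat_rpow.2 (by norm_num)).mul_left _)

lemma sum_range_eq_sum_Ico_one {M : Type*} [AddCommMonoid M] {f : ℕ → M} (hf : f 0 = 0) (n : ℕ) :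
    ∑ k ∈ range n, f k = ∑ k ∈ Ico 1 n, f k := by
  rcases Nat.eq_zero_or_pos n with rfl | hn
  · rfl
  rw [sum_range_eq_add_Ico f hn, hf, zero_add]

lemma amhs_cons_eq_sum_range {s : ℤ} (hs : s ≠ 0) (r : List ℤ) (N : ℕ) :
    amhs (s :: r) N = ∑ k ∈ range (N + 1), zTerm s k * amhs r (k - 1) := by
  rw [sum_range_eq_sum_Ico_one (by rw [zTerm_zero hs, zero_mul]), Ico_add_one_right_eq_Icc]
  rfl

lemma tendsto_amhs_tsum {s : ℤ} (hs : 2 ≤ s.natAbs) {r : List ℤ} (hr : ∀ x ∈ r, x ≠ 0) :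
    Tendsto (amhs (s :: r)) atTop (𝓝 (∑' k, zTerm s k * amhs r (k - 1))) := by
  rw [funext (amhs_cons_eq_sum_range (by omega) r)]
  exact (tendsto_add_atTop_iff_nat 1).2
    (summable_norm_zTerm_mul_amhs hs hr).of_norm.hasSum.tendsto_sum_nat

lemma azeta_eq_tsum {s : ℤ} (hs : 2 ≤ s.natAbs) {r : List ℤ} (hr : ∀ x ∈ r, x ≠ 0) :
    azeta (s :: r) = ∑' k, zTerm s k * amhs r (k - 1) :=
  (tendsto_amhs_tsum hs hr).limUnder_eq

lemma tendsto_amhs_azeta (s : ℤ) (r : List ℤ) (hs : 2 ≤ s.natAbs := by decide)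
    (hr : ∀ x ∈ r, x ≠ 0 := by decide) : Tendsto (amhs (s :: r)) atTop (𝓝 (azeta (s :: r))) :=
  azeta_eq_tsum hs hr ▸ tendsto_amhs_tsum hs hr

lemma tendsto_sum_Ico_convolution {R : Type*} [NormedRing R] [CompleteSpace R] {u v : ℕ → R}
    (hu0 : u 0 = 0) (hv0 : v 0 = 0) (hu : Summable fun k => ‖u k‖) (hv : Summable fun k => ‖v k‖) :
    Tendsto (fun N => ∑ n ∈ Ico 1 N, ∑ m ∈ Ico 1 n, u m * v (n - m)) atTop
      (𝓝 ((∑' k, u k) * ∑' k, v k)) := by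
  have hcoeff (n : ℕ) : ∑ k ∈ range (n + 1), u k * v (n - k) = ∑ k ∈ Ico 1 n, u k * v (n - k) := by
    rw [sum_range_succ, Nat.sub_self, hv0, mul_zero, add_zero,
      sum_range_eq_sum_Ico_one (by rw [hu0, zero_mul])]
  have h := (hasSum_sum_range_mul_of_summable_norm hu hv).tendsto_sum_nat
  simp only [hcoeff] at h
  simpa only [sum_range_eq_sum_Ico_one (f := fun n => ∑ k ∈ Ico 1 n, u k * v (n - k)) rfl] using h

lemma tendsto_sum_cauchyTerm {e : ℤ} (he : e.natAbs = 2) :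
    Tendsto (fun N => ∑ n ∈ Ico 1 N, cauchyTerm (zSign e) n) atTop
      (𝓝 (azeta [2] * azeta [e, 1])) := by
  have h := tendsto_sum_Ico_convolution (u := fun m => zTerm 2 m * amhs [] (m - 1))
    (v := fun l => zTerm e l * amhs [1] (l - 1)) (by simp [zTerm_zero])
    (by simp [zTerm_zero (s := e) (by omega)])
    (summable_norm_zTerm_mul_amhs (by decide) (by decide))
    (summable_norm_zTerm_mul_amhs (by omega) (by decide))
  rw [← azeta_eq_tsum (by decide) (by decide), ← azeta_eq_tsum (by omega) (by decide)] at h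
  refine h.congr fun N => sum_congr rfl fun n _ => sum_congr rfl fun m hm => ?_
  have hl : 1 ≤ n - m := by have := (mem_Ico.1 hm).2; omega
  rw [amhs_eq_nestedSum [1], Nat.sub_add_cancel hl]
  simp [zTerm, zSign, he, amhs]

lemma azeta_mul_azeta_pair_stuffle {x y z w v : ℤ} (hxy : ∀ k, zTerm x k * zTerm y k = zTerm w k)
    (hxz : ∀ k, zTerm x k * zTerm z k = zTerm v k) (hx : 2 ≤ x.natAbs := by decide)
    (hy : 2 ≤ y.natAbs := by decide) (hz : z ≠ 0 := by decide) (hw : 2 ≤ w.natAbs := by decide)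
    (hv : v ≠ 0 := by decide) :
    azeta [x] * azeta [y, z]
      = azeta [x, y, z] + azeta [y, x, z] + azeta [y, z, x] + azeta [w, z] + azeta [y, v] := by
  refine tendsto_nhds_unique ((tendsto_amhs_azeta x [] hx).mul
    (tendsto_amhs_azeta y [z] hy (by simpa))) ?_
  simp_rw [amhs_mul_amhs_pair_stuffle hxy hxz]
  exact ((((tendsto_amhs_azeta x [y, z] hx (by simp [hz]; omega)).add
    (tendsto_amhs_azeta y [x, z] hy (by simp [hz]; omega))).add
    (tendsto_amhs_azeta y [z, x] hy (by simp [hz]; omega))).add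
    (tendsto_amhs_azeta w [z] hw (by simpa))).add (tendsto_amhs_azeta y [v] hy (by simpa))

lemma azeta_two_mul_azeta_two_one :
    azeta [2] * azeta [2, 1] = 6 * azeta [3, 1, 1] + 3 * azeta [2, 2, 1] + azeta [2, 1, 2] := by
  have hsum (N : ℕ) : ∑ n ∈ Ico 1 (N + 1), cauchyTerm (zSign 2) n
      = 6 * amhs [3, 1, 1] N + 3 * amhs [2, 2, 1] N + amhs [2, 1, 2] N := by
    rw [sum_Ico_cauchyTerm (by norm_num [zSign])]
    simp [amhs_eq_nestedSum, zSign]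
    ring
  refine tendsto_nhds_unique (tendsto_sum_cauchyTerm (e := 2) rfl) ?_
  rw [← tendsto_add_atTop_iff_nat 1]
  simp_rw [hsum]
  exact (((tendsto_amhs_azeta 3 [1, 1]).const_mul 6).add
    ((tendsto_amhs_azeta 2 [2, 1]).const_mul 3)).add (tendsto_amhs_azeta 2 [1, 2])

lemma azeta_two_mul_azeta_neg_two_one :
    azeta [2] * azeta [-2, 1]
      = 2 * azeta [3, -1, 1] + 2 * azeta [-3, 1, -1] + 2 * azeta [-3, -1, -1]
        + azeta [2, -2, 1] + azeta [-2, 2, -1] + azeta [-2, -2, -1] + azeta [-2, 1, -2] := by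
  have hsum (N : ℕ) : ∑ n ∈ Ico 1 (N + 1), cauchyTerm (zSign (-2)) n
      = 2 * amhs [3, -1, 1] N + 2 * amhs [-3, 1, -1] N + 2 * amhs [-3, -1, -1] N
        + amhs [2, -2, 1] N + amhs [-2, 2, -1] N + amhs [-2, -2, -1] N + amhs [-2, 1, -2] N := by
    rw [sum_Ico_cauchyTerm (by norm_num [zSign])]
    simp [amhs_eq_nestedSum, zSign]
    ring
  refine tendsto_nhds_unique (tendsto_sum_cauchyTerm (e := -2) rfl) ?_
  rw [← tendsto_add_atTop_iff_nat 1]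
  simp_rw [hsum]
  exact (((((((tendsto_amhs_azeta 3 [-1, 1]).const_mul 2).add
    ((tendsto_amhs_azeta (-3) [1, -1]).const_mul 2)).add
    ((tendsto_amhs_azeta (-3) [-1, -1]).const_mul 2)).add (tendsto_amhs_azeta 2 [-2, 1])).add
    (tendsto_amhs_azeta (-2) [2, -1])).add (tendsto_amhs_azeta (-2) [-2, -1])).add
    (tendsto_amhs_azeta (-2) [1, -2])

theorem stmt19 :
    (6 * azeta [3, 1, 1] + 2 * azeta [2, 2, 1] + azeta [2, 1, 2] =
        azeta [2, 2, 1] + azeta [2, 1, 2] + azeta [2, 3] + azeta [4, 1]) ∧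
      (2 * azeta [3, -1, 1] + 2 * azeta [-3, -1, -1] + 2 * azeta [-3, 1, -1] +
          azeta [-2, -2, -1] + azeta [-2, 2, -1] + azeta [-2, 1, -2] =
        azeta [-2, 1, 2] + azeta [-2, 2, 1] + azeta [-2, 3] + azeta [-4, 1]) := by
  have stuffle₁ := azeta_mul_azeta_pair_stuffle (x := 2) (y := 2) (z := 1) (w := 4) (v := 3)
    (zTerm_mul_zTerm (by norm_num [zSign]) rfl) (zTerm_mul_zTerm (by norm_num [zSign]) rfl)
  have stuffle₂ := azeta_mul_azeta_pair_stuffle (x := 2) (y := -2) (z := 1) (w := -4) (v := 3)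
    (zTerm_mul_zTerm (by norm_num [zSign]) rfl) (zTerm_mul_zTerm (by norm_num [zSign]) rfl)
  constructor
  · linarith [azeta_two_mul_azeta_two_one]
  · linarith [azeta_two_mul_azeta_neg_two_one]
end
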